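/- Let d = 3, let c_{k,l} ≥ 0 for k, l ∈ ℤ/3ℤ, and define B_m = (1/3) Σ_{k,l,y=0}^{2} ω^{y(k−m)} c_{k,l} |l−y⟩⟨l+y| and F = (1/√3) Σ_{x,y=0}^{2} ω^{−xy} |x⟩⟨y|. Then for every m, k ∈ ℤ/3ℤ, the diagonal entries of F^† B_m F are ⟨k| F^† B_m F |k⟩ = (1/3) Σ_{l=0}^{2} c_{m−k, l}, and in particular they are nonnegative real numbers. -/

import Mathlib

open Matrix BigOperators Complex Kronecker
open scoped ComplexOrder

/-- `ω = exp(2πi/d)`. -/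
noncomputable def omg (d : ℕ) : ℂ := Complex.exp (2 * Real.pi * Complex.I / (d : ℂ))

/-- `ω^x` for `x : ZMod d`. -/
noncomputable def wpow (d : ℕ) [NeZero d] (x : ZMod d) : ℂ := omg d ^ x.val

/-- The block `B_m = (1/d) Σ_{k,l,y} ω^{y(k-m)} c_{k,l} |l-y⟩⟨l+y|`. -/
noncomputable def Bblock (d : ℕ) [NeZero d] (c : ZMod d → ZMod d → ℂ) (m : ZMod d) :
    Matrix (ZMod d) (ZMod d) ℂ :=
  Matrix.of fun a b =>
    (1 / (d : ℂ)) * ∑ k : ZMod d, ∑ l : ZMod d, ∑ y : ZMod d,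
      wpow d (y * (k - m)) * c k l * (if a = l - y ∧ b = l + y then 1 else 0)

/-- Discrete Fourier matrix `F = (1/√d) Σ_{x,y} ω^{-xy} |x⟩⟨y|`. -/
noncomputable def Fmat (d : ℕ) [NeZero d] : Matrix (ZMod d) (ZMod d) ℂ :=
  Matrix.of fun x y => ((1 / Real.sqrt d : ℝ) : ℂ) * wpow d (-(x * y))

/-!
Conjugating by the Fourier matrix turns the diagonal entry `⟨k|F^† B F|k⟩` into the twisted sum
`(1/d) Σ_{a,b} ω^{(a-b)k} B_{ab}`. In `B_m` the term `|l-y⟩⟨l+y|` picks up `ω^{-2yk}`, so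
orthogonality of the characters `y ↦ ω^{y t}` keeps only `k' = m + 2k`, which is `m - k` for `d = 3`.
-/

section Fourier

variable {d : ℕ} [NeZero d]

lemma wpow_eq_stdAddChar (x : ZMod d) : wpow d x = ZMod.stdAddChar x := by
  rw [wpow, omg, ZMod.stdAddChar_apply, ZMod.toCircle_apply, ← Complex.exp_nat_mul]
  ring_nf

lemma wpow_add (x y : ZMod d) : wpow d (x + y) = wpow d x * wpow d y := by
  simp only [wpow_eq_stdAddChar, AddChar.map_add_eq_mul]

lemma star_wpow (x : ZMod d) : star (wpow d x) = wpow d (-x) := by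
  have hchar : 0 < ringChar (ZMod d) := by
    rw [ZMod.ringChar_zmod_n]; exact Nat.pos_of_neZero d
  rw [wpow_eq_stdAddChar, wpow_eq_stdAddChar, Complex.star_def, AddChar.starComp_apply hchar,
    AddChar.inv_apply]

lemma sum_wpow_mul (t : ZMod d) : ∑ y, wpow d (y * t) = if t = 0 then (d : ℂ) else 0 := by
  simp only [wpow_eq_stdAddChar, AddChar.sum_mulShift t (ZMod.isPrimitive_stdAddChar d),
    ZMod.card]
  split_ifs <;> simp

lemma conjTranspose_Fmat_mul_mul_Fmat_apply_self (B : Matrix (ZMod d) (ZMod d) ℂ) (k : ZMod d) :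
    ((Fmat d)ᴴ * B * Fmat d) k k = (1 / d : ℂ) * ∑ a, ∑ b, wpow d ((a - b) * k) * B a b := by
  have hsqrt : ((1 / Real.sqrt d : ℝ) : ℂ) * ((1 / Real.sqrt d : ℝ) : ℂ) = 1 / d := by
    rw [← Complex.ofReal_mul, div_mul_div_comm, one_mul,
      Real.mul_self_sqrt (Nat.cast_nonneg d)]
    push_cast; rfl
  simp only [Matrix.mul_apply, conjTranspose_apply, Fmat, of_apply, star_mul', star_wpow,
    Complex.star_def, Complex.conj_ofReal, Finset.sum_mul, Finset.mul_sum]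
  rw [Finset.sum_comm]
  refine Finset.sum_congr rfl fun a _ => Finset.sum_congr rfl fun b _ => ?_
  rw [neg_neg, sub_mul, sub_eq_add_neg, wpow_add, ← hsqrt]
  ring

lemma sum_wpow_mul_Bblock (c : ZMod d → ZMod d → ℂ) (m k : ZMod d) :
    ∑ a, ∑ b, wpow d ((a - b) * k) * Bblock d c m a b = ∑ l, c (m + 2 * k) l := by
  have hpair (l y : ZMod d) :
      ∑ a, ∑ b, wpow d ((a - b) * k) * (if a = l - y ∧ b = l + y then 1 else 0) =
        wpow d (y * (-2 * k)) := by
    simp only [mul_ite, mul_one, mul_zero, ite_and, Finset.sum_ite_irrel, Finset.sum_const_zero,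
      Finset.sum_ite_eq', Finset.mem_univ, if_true]
    ring_nf
  calc ∑ a, ∑ b, wpow d ((a - b) * k) * Bblock d c m a b
      = (1 / d : ℂ) * ∑ k', ∑ l, c k' l * ∑ y, wpow d (y * (k' - m)) *
          ∑ a, ∑ b, wpow d ((a - b) * k) * (if a = l - y ∧ b = l + y then 1 else 0) := by
        simp only [Bblock, of_apply, Finset.mul_sum]
        rw [Finset.sum_comm_cycle]
        refine Finset.sum_congr rfl fun k' _ => ?_
        rw [Finset.sum_comm_cycle]
        refine Finset.sum_congr rfl fun l _ => ?_
        rw [Finset.sum_comm_cycle]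
        refine Finset.sum_congr rfl fun y _ => ?_
        refine Finset.sum_congr rfl fun a _ => Finset.sum_congr rfl fun b _ => ?_
        ring
    _ = (1 / d : ℂ) * ∑ k', ∑ l, c k' l * ∑ y, wpow d (y * (k' - (m + 2 * k))) := by
        congr 1
        refine Finset.sum_congr rfl fun k' _ => Finset.sum_congr rfl fun l _ => ?_
        congr 1
        refine Finset.sum_congr rfl fun y _ => ?_
        rw [hpair, ← wpow_add]
        ring_nf
    _ = ∑ l, c (m + 2 * k) l := by
        simp only [sum_wpow_mul, sub_eq_zero, mul_ite, mul_zero, Finset.sum_ite_irrel,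
          Finset.sum_const_zero, Finset.sum_ite_eq', Finset.mem_univ, if_true, Finset.mul_sum]
        refine Finset.sum_congr rfl fun l _ => ?_
        field_simp [NeZero.ne d]

theorem conjTranspose_Fmat_mul_Bblock_mul_Fmat_apply_self (c : ZMod d → ZMod d → ℂ)
    (m k : ZMod d) :
    ((Fmat d)ᴴ * Bblock d c m * Fmat d) k k = (1 / d : ℂ) * ∑ l, c (m + 2 * k) l := by
  rw [conjTranspose_Fmat_mul_mul_Fmat_apply_self, sum_wpow_mul_Bblock]

end Fourier

/-- For `d = 3` and nonnegative coefficients `c`, the diagonal entries of `F^† B_m F` are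
`⟨k|F^† B_m F|k⟩ = (1/3) Σ_l c_{m-k,l}`, nonnegative real numbers. -/
theorem stmt17 (c : ZMod 3 → ZMod 3 → ℝ) (hc : ∀ k l, 0 ≤ c k l) :
    ∀ m k : ZMod 3,
      ((Fmat 3)ᴴ * Bblock 3 (fun k l => (c k l : ℂ)) m * Fmat 3) k k =
        (((1 / 3 : ℝ) * ∑ l : ZMod 3, c (m - k) l : ℝ) : ℂ) ∧
      0 ≤ (1 / 3 : ℝ) * ∑ l : ZMod 3, c (m - k) l := by
  intro m k
  have htwo : (2 : ZMod 3) * k = -k := by revert k; decide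
  refine ⟨?_, mul_nonneg (by norm_num) (Finset.sum_nonneg fun l _ => hc _ l)⟩
  rw [conjTranspose_Fmat_mul_Bblock_mul_Fmat_apply_self, htwo, ← sub_eq_add_neg]
  push_cast
  rfl
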